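/- Let X be a pointed metric space, Y a real Banach space, and 1 ≤ p < ∞. For every continuous linear functional y* ∈ Y*, every Lipschitz function f : X → ℝ with f(0) = 0, and every Y-valued molecule m on X, one has |Σ_{x∈X} f(x)·y*(m(x))| ≤ ‖y*‖ · Lip(f) · μ_p(m), where Lip(f) is the Lipschitz constant of f. -/

import Mathlib

open scoped BigOperators NNReal

noncomputable section

variable {X : Type*} [MetricSpace X] {Y : Type*} [NormedAddCommGroup Y] [NormedSpace ℝ Y]

/-- The atom `y·m_{x x'}`: the finitely supported function equal to `y` at `x`,
`-y` at `x'` and `0` elsewhere. -/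
def molAtom (x x' : X) (y : Y) : X →₀ Y :=
  Finsupp.single x y - Finsupp.single x' y

/-- The space `ℱ(X;Y)` of `Y`-valued molecules on `X`: finitely supported functions
`m : X → Y` whose values sum to `0`. -/
def MolSpace (X : Type*) (Y : Type*) [NormedAddCommGroup Y] [NormedSpace ℝ Y] :
    Submodule ℝ (X →₀ Y) :=
  LinearMap.ker (Finsupp.lsum ℝ fun _ : X => (LinearMap.id : Y →ₗ[ℝ] Y))

/-- `sup_{y* ∈ B_{Y*}} (Σ_i |y*(y_i)|^q)^{1/q}`, the weak `l_q` norm of a finite family in `Y`. -/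
def dualBallSup (q : ℝ) {n : ℕ} (y : Fin n → Y) : ℝ :=
  ⨆ g : {g : Y →L[ℝ] ℝ // ‖g‖ ≤ 1}, (∑ i, |g.1 (y i)| ^ q) ^ (1 / q)

/-- The weak factor in the definition of `μ_p`: for `p = 1` it is
`sup_{y* ∈ B_{Y*}} max_i |y*(y_i)|`, and for `p > 1` it is the weak `l_{p*}` norm
with `p* = p/(p-1)` the conjugate exponent. -/
def weakFactor (p : ℝ) {n : ℕ} (y : Fin n → Y) : ℝ :=
  if p = 1 then ⨆ g : {g : Y →L[ℝ] ℝ // ‖g‖ ≤ 1}, ⨆ i, |g.1 (y i)|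
  else dualBallSup (p / (p - 1)) y

/-- The norm `μ_p` on molecules: the infimum over all representations
`m = Σ_i λ_i y_i m_{x_i x_i'}` of
`(Σ_i |λ_i|^p d(x_i,x_i')^p)^{1/p} · sup_{y* ∈ B_{Y*}} (Σ_i |y*(y_i)|^{p*})^{1/p*}`. -/
def muNorm (p : ℝ) (m : X →₀ Y) : ℝ :=
  sInf {c : ℝ | ∃ (n : ℕ) (lam : Fin n → ℝ) (y : Fin n → Y) (x x' : Fin n → X),
    m = ∑ i, lam i • molAtom (x i) (x' i) (y i) ∧
    c = (∑ i, |lam i| ^ p * dist (x i) (x' i) ^ p) ^ (1 / p) * weakFactor p y}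

/-
Each atom pairs to `λ (f x - f x') y*(y)`, and Lipschitzness bounds this by
`‖y*‖ Lip(f) · |λ| d(x,x') · |h(y)|` with `h = y*/‖y*‖` in the dual unit ball. Summing over a
representation, Hölder's inequality with exponents `p, p*` (or the trivial `l₁–l∞` bound when
`p = 1`) gives `‖y*‖ Lip(f)` times the cost of the representation; taking the infimum over all
representations, of which every molecule has at least one, gives the claim.
-/

open Finset

variable {α : Type*}

lemma abs_apply_le_of_norm_le_one {h : Y →L[ℝ] ℝ} (hh : ‖h‖ ≤ 1) (v : Y) : |h v| ≤ ‖v‖ := by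
  simpa using h.le_of_opNorm_le hh v

lemma ContinuousLinearMap.exists_norm_le_one_eq_norm_smul (g : Y →L[ℝ] ℝ) :
    ∃ h : Y →L[ℝ] ℝ, ‖h‖ ≤ 1 ∧ g = ‖g‖ • h := by
  rcases eq_or_ne g 0 with rfl | hg
  · exact ⟨0, by simp, by simp⟩
  · refine ⟨‖g‖⁻¹ • g, ?_, ?_⟩
    · rw [norm_smul, norm_inv, norm_norm, inv_mul_cancel₀ (norm_ne_zero_iff.mpr hg)]
    · rw [smul_inv_smul₀ (norm_ne_zero_iff.mpr hg)]

lemma rpow_sum_abs_apply_le_dualBallSup {q : ℝ} (hq : 0 ≤ q) {n : ℕ} (y : Fin n → Y)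
    {h : Y →L[ℝ] ℝ} (hh : ‖h‖ ≤ 1) :
    (∑ i, |h (y i)| ^ q) ^ (1 / q) ≤ dualBallSup q y := by
  refine le_ciSup (f := fun h : {g : Y →L[ℝ] ℝ // ‖g‖ ≤ 1} => (∑ i, |h.1 (y i)| ^ q) ^ (1 / q))
    ⟨(∑ i, ‖y i‖ ^ q) ^ (1 / q), ?_⟩ ⟨h, hh⟩
  rintro _ ⟨h', rfl⟩
  refine Real.rpow_le_rpow (by positivity) (sum_le_sum fun i _ => ?_) (by positivity)
  exact Real.rpow_le_rpow (abs_nonneg _) (abs_apply_le_of_norm_le_one h'.2 (y i)) hq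

lemma abs_apply_le_weakFactor_one {n : ℕ} (y : Fin n → Y) {h : Y →L[ℝ] ℝ} (hh : ‖h‖ ≤ 1)
    (i : Fin n) : |h (y i)| ≤ weakFactor 1 y := by
  have hbdd : BddAbove (Set.range fun h : {g : Y →L[ℝ] ℝ // ‖g‖ ≤ 1} => ⨆ i, |h.1 (y i)|) := by
    refine ⟨∑ i, ‖y i‖, ?_⟩
    rintro _ ⟨h', rfl⟩
    refine Real.iSup_le (fun i => ?_) (sum_nonneg fun i _ => norm_nonneg _)
    exact (abs_apply_le_of_norm_le_one h'.2 (y i)).trans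
      (single_le_sum (fun j _ => norm_nonneg (y j)) (mem_univ i))
  rw [weakFactor, if_pos rfl]
  exact (le_ciSup (Set.finite_range _).bddAbove i).trans (le_ciSup hbdd ⟨h, hh⟩)

lemma sum_mul_abs_apply_le_weakFactor {p : ℝ} (hp : 1 ≤ p) {n : ℕ} (a : Fin n → ℝ)
    (ha : ∀ i, 0 ≤ a i) (y : Fin n → Y) {h : Y →L[ℝ] ℝ} (hh : ‖h‖ ≤ 1) :
    ∑ i, a i * |h (y i)| ≤ (∑ i, a i ^ p) ^ (1 / p) * weakFactor p y := by
  rcases hp.eq_or_lt with rfl | hp'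
  · calc ∑ i, a i * |h (y i)| ≤ ∑ i, a i * weakFactor 1 y := by
          gcongr with i
          · exact ha i
          · exact abs_apply_le_weakFactor_one y hh i
      _ = (∑ i, a i ^ (1 : ℝ)) ^ (1 / (1 : ℝ)) * weakFactor 1 y := by
          simp [sum_mul]
  · have hpq := Real.HolderConjugate.conjExponent hp'
    rw [weakFactor, if_neg hp'.ne']
    calc ∑ i, a i * |h (y i)|
        ≤ (∑ i, a i ^ p) ^ (1 / p) * (∑ i, |h (y i)| ^ (p / (p - 1))) ^ (1 / (p / (p - 1))) :=
          Real.inner_le_Lp_mul_Lq_of_nonneg univ hpq (fun i _ => ha i) (fun i _ => abs_nonneg _)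
      _ ≤ (∑ i, a i ^ p) ^ (1 / p) * dualBallSup (p / (p - 1)) y := by
          refine mul_le_mul_of_nonneg_left ?_
            (Real.rpow_nonneg (sum_nonneg fun i _ => Real.rpow_nonneg (ha i) _) _)
          exact rpow_sum_abs_apply_le_dualBallSup hpq.symm.nonneg y hh

lemma abs_sum_pairing_le {p : ℝ} (hp : 1 ≤ p) (g : Y →L[ℝ] ℝ) {f : X → ℝ} {K : ℝ≥0}
    (hf : LipschitzWith K f) {n : ℕ} (lam : Fin n → ℝ) (y : Fin n → Y) (x x' : Fin n → X) :
    |∑ i, lam i * ((f (x i) - f (x' i)) * g (y i))|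
      ≤ ‖g‖ * K * ((∑ i, |lam i| ^ p * dist (x i) (x' i) ^ p) ^ (1 / p) * weakFactor p y) := by
  obtain ⟨h, hh, hg⟩ := g.exists_norm_le_one_eq_norm_smul
  have hgh : ∀ v, g v = ‖g‖ * h v := fun v => by simpa using congrArg (· v) hg
  set a : Fin n → ℝ := fun i => |lam i| * dist (x i) (x' i) with ha
  have hterm : ∀ i, |lam i * ((f (x i) - f (x' i)) * g (y i))| ≤ ‖g‖ * K * (a i * |h (y i)|) := by
    intro i
    have hlip : |f (x i) - f (x' i)| ≤ K * dist (x i) (x' i) := by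
      simpa [Real.dist_eq] using hf.dist_le_mul (x i) (x' i)
    calc |lam i * ((f (x i) - f (x' i)) * g (y i))|
        = |lam i| * (|f (x i) - f (x' i)| * (‖g‖ * |h (y i)|)) := by
          rw [hgh, abs_mul, abs_mul, abs_mul, abs_norm]
      _ ≤ |lam i| * (K * dist (x i) (x' i) * (‖g‖ * |h (y i)|)) := by gcongr
      _ = ‖g‖ * K * (a i * |h (y i)|) := by ring
  calc |∑ i, lam i * ((f (x i) - f (x' i)) * g (y i))|
      ≤ ∑ i, ‖g‖ * K * (a i * |h (y i)|) :=
        (abs_sum_le_sum_abs _ _).trans (sum_le_sum fun i _ => hterm i)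
    _ = ‖g‖ * K * ∑ i, a i * |h (y i)| := (mul_sum _ _ _).symm
    _ ≤ ‖g‖ * K * ((∑ i, a i ^ p) ^ (1 / p) * weakFactor p y) := by
      gcongr
      exact sum_mul_abs_apply_le_weakFactor hp a (fun i => by positivity) y hh
    _ = ‖g‖ * K * ((∑ i, |lam i| ^ p * dist (x i) (x' i) ^ p) ^ (1 / p) * weakFactor p y) := by
      simp only [ha, Real.mul_rpow (abs_nonneg _) dist_nonneg]

lemma sum_smul_molAtom_pairing (f : α → ℝ) (g : Y →L[ℝ] ℝ) {n : ℕ} (lam : Fin n → ℝ)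
    (y : Fin n → Y) (x x' : Fin n → α) :
    ((∑ i, lam i • molAtom (x i) (x' i) (y i)).sum fun a b => f a * g b)
      = ∑ i, lam i * ((f (x i) - f (x' i)) * g (y i)) := by
  have hlsum : ∀ m : α →₀ Y,
      (m.sum fun a b => f a * g b) = Finsupp.lsum ℝ (fun a => f a • (g : Y →ₗ[ℝ] ℝ)) m :=
    fun m => by rw [Finsupp.lsum_apply]; exact Finsupp.sum_congr fun a _ => by simp
  simp only [hlsum, map_sum, map_smul, molAtom, map_sub, Finsupp.lsum_single,
    LinearMap.smul_apply, ContinuousLinearMap.coe_coe, smul_eq_mul]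
  exact sum_congr rfl fun i _ => by ring

lemma mem_molSpace_iff {m : α →₀ Y} : m ∈ MolSpace α Y ↔ (m.sum fun _ v => v) = 0 :=
  Iff.rfl

lemma eq_sum_molAtom_of_mem_molSpace {m : α →₀ Y} (hm : m ∈ MolSpace α Y) (x₀ : α) :
    m = m.sum fun x v => molAtom x x₀ v := by
  rw [mem_molSpace_iff] at hm
  simp only [molAtom, Finsupp.sum_sub, Finsupp.sum_single, ← Finsupp.single_sum, hm,
    Finsupp.single_zero, sub_zero]

lemma exists_molAtom_repr {m : α →₀ Y} (hm : m ∈ MolSpace α Y) :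
    ∃ (n : ℕ) (lam : Fin n → ℝ) (y : Fin n → Y) (x x' : Fin n → α),
      m = ∑ i, lam i • molAtom (x i) (x' i) (y i) := by
  rcases isEmpty_or_nonempty α with _ | ⟨⟨x₀⟩⟩
  · exact ⟨0, nofun, nofun, nofun, nofun, by simp [Subsingleton.elim m 0]⟩
  · let e := m.support.equivFin.symm
    refine ⟨m.support.card, fun _ => 1, fun i => m (e i), fun i => e i, fun _ => x₀, ?_⟩
    conv_lhs => rw [eq_sum_molAtom_of_mem_molSpace hm x₀]
    simp only [one_smul]
    exact (sum_coe_sort m.support fun x => molAtom x x₀ (m x)).symm.trans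
      (Equiv.sum_comp e fun x : m.support => molAtom (x : α) x₀ (m x)).symm

theorem pairing_le_muNorm_general (p : ℝ) (hp : 1 ≤ p)
    (g : Y →L[ℝ] ℝ) (f : X → ℝ) (K : ℝ≥0) (hf : LipschitzWith K f)
    (m : X →₀ Y) (hm : m ∈ MolSpace X Y) :
    |m.sum fun x y => f x * g y| ≤ ‖g‖ * K * muNorm p m := by
  obtain ⟨n, lam, y, x, x', hrep⟩ := exists_molAtom_repr hm
  rw [muNorm, ← smul_eq_mul, ← Real.sInf_smul_of_nonneg (by positivity)]
  refine le_csInf ?_ ?_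
  · exact Set.Nonempty.smul_set ⟨_, n, lam, y, x, x', hrep, rfl⟩
  · rintro _ ⟨_, ⟨n, lam, y, x, x', rfl, rfl⟩, rfl⟩
    rw [sum_smul_molAtom_pairing]
    exact abs_sum_pairing_le hp g hf lam y x x'

/-- For every `y* ∈ Y*`, every Lipschitz `f : X → ℝ` vanishing at the
base point, and every molecule `m`, `|Σ_x f(x)·y*(m(x))| ≤ ‖y*‖ · Lip(f) · μ_p(m)`. -/
theorem pairing_le_muNorm [CompleteSpace Y] (x0 : X) (p : ℝ) (hp : 1 ≤ p)
    (g : Y →L[ℝ] ℝ) (f : X → ℝ) (K : ℝ≥0) (hf : LipschitzWith K f) (hf0 : f x0 = 0)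
    (m : X →₀ Y) (hm : m ∈ MolSpace X Y) :
    |m.sum fun x y => f x * g y| ≤ ‖g‖ * K * muNorm p m :=
  pairing_le_muNorm_general p hp g f K hf m hm

end
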